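/- (Character distribution relation.) For every integer k ≥ 0, the limit H_{k,χ}^{(r)}(u,q|a_1,…,a_r) := lim_{N→∞} ((1−u)/(1−u^{d·p^N}))^r · Σ_{x_1=0}^{dp^N−1} ⋯ Σ_{x_r=0}^{dp^N−1} (Π_{j=1}^r χ(x_j)) · [a_1x_1+⋯+a_rx_r : q]^k · u^{x_1+⋯+x_r} exists in ℂ_p, and (1−u)^{−r} · H_{k,χ}^{(r)}(u,q|a_1,…,a_r) = (1−u^d)^{−r} · [d:q]^k · Σ_{i_1=0}^{d−1} ⋯ Σ_{i_r=0}^{d−1} u^{i_1+⋯+i_r} (Π_{j=1}^r χ(i_j)) · H̃_k(i_1,…,i_r), where H̃_k(i⃗) := (1−u^d)^r (1−q^d)^{−k} Σ_{l=0}^k binom(k,l)(−1)^l q^{l(a_1i_1+⋯+a_ri_r)} Π_{j=1}^r (1−q^{d·l·a_j} u^d)^{−1} (this is H_k^{(r)}(Σ_j a_j i_j / d, u^d, q^d | a_1,…,a_r) with the power (q^d)^{l·Σ_j a_j i_j/d} read as q^{l·Σ_j a_j i_j}). -/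

import Mathlib

/-!
Expanding `[z : q] ^ k` binomially writes the summand as a combination, over `l ≤ k`, of the
characters `x ↦ q ^ (l ∑ a_j x_j) u ^ (∑ x_j)` of `ℕ^r`, so each sum over the box `[0, d p^N)^r`
factors into one-variable sums `∑_{n < d p^N} χ(n) (β u)^n` with `β = q ^ (l a_j)`. By periodicity
of `χ` such a sum equals `(∑_{i<d} χ(i) (β u)^i) (1 - (β u)^(d p^N)) / (1 - (β u)^d)`, and
`(1 - (β u)^(d p^N)) / (1 - u^(d p^N)) → 1` because `β ^ (p^N) → 1` for a principal unit `β`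
while `‖1 - u^f‖ ≥ 1`. Expanding the limit back over `[0, d)^r` gives the right-hand side; there
`1 - q^d ≠ 0` since `‖q - 1‖ < p^(-1/(p-1))` leaves no room for a nontrivial root of unity.
-/

open Filter Finset

/-- For `q` in a normed field and a `p`-adic integer `z`, the power `q^z`, defined as the
limit of `q^(z mod p^N)` (for convergent `q` this agrees with `exp_p (z · log_p q)`). -/
noncomputable def qpow {p : ℕ} [Fact p.Prime] {K : Type*} [NormedField K] (q : K) (z : ℤ_[p]) :
    K :=
  limUnder atTop fun N : ℕ => q ^ (z.appr N)

/-- The `q`-number `[z : q] = (1 - q^z)/(1 - q)` for a `p`-adic integer `z`. -/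
noncomputable def qnum {p : ℕ} [Fact p.Prime] {K : Type*} [NormedField K] (q : K) (z : ℤ_[p]) :
    K :=
  (1 - qpow q z) / (1 - q)

/-- The `q`-analogue of the Euler–Barnes polynomial
`H_n^{(r)}(w, u, q | a_1, …, a_r)
  = (1-u)^r (1-q)^{-n} ∑_{l=0}^n C(n,l) (-1)^l q^{lw} ∏_j (1 - q^{l a_j} u)⁻¹`. -/
noncomputable def qEulerBarnes {p : ℕ} [Fact p.Prime] {K : Type*} [NormedField K]
    (r n : ℕ) (w : ℤ_[p]) (u q : K) (a : Fin r → ℤ_[p]) : K :=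
  (1 - u) ^ r * ((1 - q)⁻¹) ^ n *
    ∑ l ∈ Finset.range (n + 1),
      (n.choose l : K) * (-1) ^ l * qpow q ((l : ℤ_[p]) * w) *
        ∏ j, (1 - qpow q ((l : ℤ_[p]) * a j) * u)⁻¹

open Topology

section PrincipalUnits

variable {K : Type*} [NormedField K] [IsUltrametricDist K] {p : ℕ} {x : K}

lemma norm_le_one_of_norm_sub_one_le_one (hx : ‖x - 1‖ ≤ 1) : ‖x‖ ≤ 1 := by
  simpa using (IsUltrametricDist.norm_add_le_max (x - 1) 1).trans (max_le hx norm_one.le)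

lemma norm_pow_sub_one_le (hx : ‖x - 1‖ ≤ 1) (m : ℕ) : ‖x ^ m - 1‖ ≤ ‖x - 1‖ := by
  induction m with
  | zero => simp
  | succ m ih =>
    have hxm : ‖x ^ m * (x - 1)‖ ≤ ‖x - 1‖ := by
      rw [norm_mul, norm_pow]
      exact mul_le_of_le_one_left (norm_nonneg _)
        (pow_le_one₀ (norm_nonneg _) (norm_le_one_of_norm_sub_one_le_one hx))
    calc ‖x ^ (m + 1) - 1‖ = ‖x ^ m * (x - 1) + (x ^ m - 1)‖ := by ring_nf
      _ ≤ ‖x - 1‖ := (IsUltrametricDist.norm_add_le_max _ _).trans (max_le hxm ih)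

lemma norm_pow_sub_pow_le_of_modEq (hx : ‖x - 1‖ ≤ 1) {a b n : ℕ} (h : a ≡ b [MOD n]) :
    ‖x ^ a - x ^ b‖ ≤ ‖x ^ n - 1‖ := by
  wlog hba : b ≤ a generalizing a b
  · rw [norm_sub_rev]; exact this h.symm (by omega)
  obtain ⟨m, hm⟩ := (Nat.modEq_iff_dvd' hba).mp h.symm
  have hxn : ‖x ^ n - 1‖ ≤ 1 := (norm_pow_sub_one_le hx n).trans hx
  calc ‖x ^ a - x ^ b‖ = ‖x ^ b‖ * ‖(x ^ n) ^ m - 1‖ := by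
        rw [← norm_mul, ← pow_mul, ← hm, mul_sub, ← pow_add, Nat.add_sub_cancel' hba, mul_one]
    _ ≤ 1 * ‖x ^ n - 1‖ := by
        gcongr
        · exact norm_pow x b ▸ pow_le_one₀ (norm_nonneg _) (norm_le_one_of_norm_sub_one_le_one hx)
        · exact norm_pow_sub_one_le hxn m
    _ = ‖x ^ n - 1‖ := one_mul _

lemma norm_one_add_pow_prime_sub_le (hp : p.Prime) {t : K} (ht : ‖t‖ ≤ 1) :
    ‖(1 + t) ^ p - 1 - p * t - t ^ p‖ ≤ ‖(p : K)‖ * ‖t‖ ^ 2 := by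
  obtain ⟨n, rfl⟩ := Nat.exists_eq_add_of_le' hp.two_le
  have hexpand : (1 + t) ^ (n + 2) - 1 - (n + 2 : ℕ) * t - t ^ (n + 2)
      = ∑ i ∈ range n, t ^ (i + 2) * ((n + 2).choose (i + 2) : K) := by
    rw [add_comm, add_pow, sum_range_succ, sum_range_succ', sum_range_succ']
    simp only [one_pow, mul_one, pow_zero, pow_one, zero_add, Nat.choose_zero_right,
      Nat.choose_one_right, Nat.choose_self, Nat.cast_one]
    ring
  rw [hexpand]
  refine IsUltrametricDist.norm_sum_le_of_forall_le_of_nonneg (by positivity) fun i hi => ?_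
  obtain ⟨c, hc⟩ := hp.dvd_choose_self (k := i + 2) (by omega) (by simp at hi; omega)
  rw [norm_mul, hc, Nat.cast_mul, norm_mul, norm_pow, mul_comm]
  exact mul_le_mul
    (mul_le_of_le_one_right (norm_nonneg _) (IsUltrametricDist.norm_natCast_le_one K c))
    (pow_le_pow_of_le_one (norm_nonneg _) ht (by omega)) (by positivity) (norm_nonneg _)

lemma norm_pow_prime_sub_one_le (hp : p.Prime) (hx : ‖x - 1‖ ≤ 1) :
    ‖x ^ p - 1‖ ≤ max ‖(p : K)‖ (‖x - 1‖ ^ (p - 1)) * ‖x - 1‖ := by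
  set t := x - 1
  set c := max ‖(p : K)‖ (‖t‖ ^ (p - 1))
  have hE := norm_one_add_pow_prime_sub_le hp hx
  have hx' : x = 1 + t := by ring
  have hpt : ‖(p : K) * t‖ ≤ c * ‖t‖ := by rw [norm_mul]; gcongr; exact le_max_left _ _
  have htp : ‖t ^ p‖ ≤ c * ‖t‖ := by
    rw [norm_pow, ← Nat.sub_add_cancel hp.one_le, pow_succ]
    gcongr
    exact le_max_right _ _
  have hE' : ‖(1 + t) ^ p - 1 - p * t - t ^ p‖ ≤ c * ‖t‖ := by
    refine hE.trans ?_
    rw [sq, ← mul_assoc]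
    gcongr
    exact (mul_le_of_le_one_right (norm_nonneg _) hx).trans (le_max_left _ _)
  calc ‖x ^ p - 1‖ = ‖((1 + t) ^ p - 1 - p * t - t ^ p) + p * t + t ^ p‖ := by rw [hx']; ring_nf
    _ ≤ c * ‖t‖ := (IsUltrametricDist.norm_add_le_max _ _).trans <| max_le
        ((IsUltrametricDist.norm_add_le_max _ _).trans (max_le hE' hpt)) htp

lemma norm_pow_prime_pow_sub_one_le (hp : p.Prime) (hx : ‖x - 1‖ ≤ 1) (N : ℕ) :
    ‖x ^ p ^ N - 1‖ ≤ max ‖(p : K)‖ (‖x - 1‖ ^ (p - 1)) ^ N * ‖x - 1‖ := by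
  set c := max ‖(p : K)‖ (‖x - 1‖ ^ (p - 1))
  induction N with
  | zero => simp
  | succ N ih =>
    have hy : ‖x ^ p ^ N - 1‖ ≤ ‖x - 1‖ := norm_pow_sub_one_le hx _
    calc ‖x ^ p ^ (N + 1) - 1‖ = ‖(x ^ p ^ N) ^ p - 1‖ := by rw [← pow_mul, pow_succ]
      _ ≤ max ‖(p : K)‖ (‖x ^ p ^ N - 1‖ ^ (p - 1)) * ‖x ^ p ^ N - 1‖ :=
          norm_pow_prime_sub_one_le hp (hy.trans hx)
      _ ≤ c * (c ^ N * ‖x - 1‖) := by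
          gcongr
          exact max_le_max le_rfl (pow_le_pow_left₀ (norm_nonneg _) hy _)
      _ = c ^ (N + 1) * ‖x - 1‖ := by ring

lemma tendsto_pow_prime_pow_nhds_one (hp : p.Prime) (hpK : ‖(p : K)‖ < 1) (hx : ‖x - 1‖ < 1) :
    Tendsto (fun N => x ^ p ^ N) atTop (𝓝 1) := by
  have hc : max ‖(p : K)‖ (‖x - 1‖ ^ (p - 1)) < 1 :=
    max_lt hpK (pow_lt_one₀ (norm_nonneg _) hx (by have := hp.two_le; omega))
  rw [tendsto_iff_norm_sub_tendsto_zero]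
  refine squeeze_zero (fun _ => norm_nonneg _) (norm_pow_prime_pow_sub_one_le hp hx.le) ?_
  simpa using (tendsto_pow_atTop_nhds_zero_of_lt_one (by positivity) hc).mul_const ‖x - 1‖

end PrincipalUnits

section RootsOfUnity

variable {K : Type*} [NormedField K] [IsUltrametricDist K] {p m : ℕ} {x : K}

lemma norm_natCast_eq_one_of_not_dvd (hp : p.Prime) (hpK : ‖(p : K)‖ < 1) (hm : ¬p ∣ m) :
    ‖(m : K)‖ = 1 := by
  obtain ⟨a, b, hab⟩ := Nat.isCoprime_iff_coprime.mpr (hp.coprime_iff_not_dvd.mpr hm)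
  have h1 : (1 : K) = a * p + b * m := by exact_mod_cast congrArg (Int.cast : ℤ → K) hab.symm
  have hle : 1 ≤ max ‖(p : K)‖ ‖(m : K)‖ := by
    calc (1 : ℝ) = ‖(a : K) * p + b * m‖ := by rw [← h1, norm_one]
      _ ≤ max ‖(a : K) * p‖ ‖(b : K) * m‖ := IsUltrametricDist.norm_add_le_max _ _
      _ ≤ max ‖(p : K)‖ ‖(m : K)‖ := by
          rw [norm_mul, norm_mul]
          gcongr <;> exact mul_le_of_le_one_left (norm_nonneg _)
            (IsUltrametricDist.norm_intCast_le_one K _)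
  exact le_antisymm (IsUltrametricDist.norm_natCast_le_one K m)
    ((le_max_iff.mp hle).resolve_left hpK.not_ge)

/-- If `x ≠ 1` then `∑_{i<m} x ^ i = 0`, yet it is congruent to `m`, a unit, modulo `x - 1`. -/
lemma eq_one_of_pow_eq_one_of_norm_natCast (hx : ‖x - 1‖ < 1) (hm : ‖(m : K)‖ = 1)
    (h : x ^ m = 1) : x = 1 := by
  by_contra hx1
  have hgeom : ∑ i ∈ range m, x ^ i = 0 := by
    have := geom_sum_mul x m
    rw [h, sub_self, mul_eq_zero] at this
    exact this.resolve_right (sub_ne_zero.mpr hx1)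
  have hsmall : ‖∑ i ∈ range m, (x ^ i - 1)‖ < 1 := by
    refine lt_of_le_of_lt (IsUltrametricDist.norm_sum_le_of_forall_le_of_nonneg (norm_nonneg _)
      fun i _ => norm_pow_sub_one_le hx.le i) hx
  rw [sum_sub_distrib, hgeom, sum_const, card_range, nsmul_one, zero_sub, norm_neg, hm] at hsmall
  exact lt_irrefl _ hsmall

/-- For `x = 1 + t`, the term `p t` of `(1 + t) ^ p - 1` strictly dominates all the others. -/
lemma eq_one_of_pow_prime_eq_one (hp : p.Prime) (hx : ‖x - 1‖ ^ (p - 1) < ‖(p : K)‖)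
    (h : x ^ p = 1) : x = 1 := by
  set t := x - 1
  by_contra hx1
  have ht0 : 0 < ‖t‖ := norm_pos_iff.mpr (sub_ne_zero.mpr hx1)
  have ht1 : ‖t‖ < 1 :=
    (pow_lt_one_iff_of_nonneg (norm_nonneg _) (by have := hp.two_le; omega)).mp
      (hx.trans_le (IsUltrametricDist.norm_natCast_le_one K p))
  have hp0 : 0 < ‖(p : K)‖ := (pow_nonneg (norm_nonneg _) _).trans_lt hx
  have hE := norm_one_add_pow_prime_sub_le hp ht1.le
  set E := (1 + t) ^ p - 1 - p * t - t ^ p with hE_def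
  have htp : ‖t ^ p‖ < ‖(p : K)‖ * ‖t‖ := by
    rw [norm_pow, ← pow_sub_one_mul hp.ne_zero]
    exact mul_lt_mul_of_pos_right hx ht0
  have hpt : (p : K) * t = -(E + t ^ p) := by
    rw [hE_def, show 1 + t = x by ring, h]; ring
  have := calc ‖(p : K)‖ * ‖t‖ = ‖(p : K) * t‖ := (norm_mul _ _).symm
    _ ≤ max ‖E‖ ‖t ^ p‖ := by
        rw [hpt, norm_neg]; exact IsUltrametricDist.norm_add_le_max _ _
    _ < ‖(p : K)‖ * ‖t‖ := by
        refine max_lt (hE.trans_lt ?_) htp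
        rw [sq]
        gcongr
        exact mul_lt_of_lt_one_left ht0 ht1
  exact lt_irrefl _ this

lemma eq_one_of_pow_eq_one (hp : p.Prime) (hpK : ‖(p : K)‖ < 1)
    (hx : ‖x - 1‖ ^ (p - 1) < ‖(p : K)‖) (hm : m ≠ 0) (h : x ^ m = 1) : x = 1 := by
  have hx1 : ‖x - 1‖ < 1 := (pow_lt_one_iff_of_nonneg (norm_nonneg _)
    (by have := hp.two_le; omega)).mp (hx.trans hpK)
  obtain ⟨e, m', hpm', rfl⟩ := Nat.exists_eq_pow_mul_and_not_dvd hm p hp.ne_one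
  have hxe : x ^ p ^ e = 1 := by
    refine eq_one_of_pow_eq_one_of_norm_natCast ((norm_pow_sub_one_le hx1.le _).trans_lt hx1)
      (norm_natCast_eq_one_of_not_dvd hp hpK hpm') ?_
    rwa [← pow_mul]
  clear h hm
  induction e with
  | zero => simpa using hxe
  | succ e ih =>
    refine ih (eq_one_of_pow_prime_eq_one hp ?_ (by rwa [← pow_mul, ← pow_succ]))
    exact (pow_le_pow_left₀ (norm_nonneg _) (norm_pow_sub_one_le hx1.le _) _).trans_lt hx

end RootsOfUnity

section Qpow

variable {p : ℕ} [Fact p.Prime] {K : Type*} [NormedField K] [IsUltrametricDist K]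
  [CompleteSpace K] {q : K}

lemma PadicInt.natCast_appr_eq_toZModPow (z : ℤ_[p]) {N n : ℕ} (h : N ≤ n) :
    ((z.appr n : ℕ) : ZMod (p ^ N)) = PadicInt.toZModPow N z := by
  rw [← PadicInt.cast_toZModPow N n h, show PadicInt.toZModPow n z = z.appr n from rfl,
    ZMod.cast_natCast (pow_dvd_pow p h)]

lemma tendsto_pow_qpow (hpK : ‖(p : K)‖ < 1) (hq : ‖q - 1‖ < 1) {z : ℤ_[p]} {n : ℕ → ℕ}
    (hn : ∀ N, (n N : ZMod (p ^ N)) = PadicInt.toZModPow N z) :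
    Tendsto (fun N => q ^ n N) atTop (𝓝 (qpow q z)) := by
  have hε : Tendsto (fun N => ‖q ^ p ^ N - 1‖) atTop (𝓝 0) :=
    tendsto_iff_norm_sub_tendsto_zero.mp (tendsto_pow_prime_pow_nhds_one Fact.out hpK hq)
  have hdist : ∀ {N a b : ℕ}, (a : ZMod (p ^ N)) = b → dist (q ^ a) (q ^ b) ≤ ‖q ^ p ^ N - 1‖ :=
    fun h => (dist_eq_norm _ _).trans_le
      (norm_pow_sub_pow_le_of_modEq hq.le ((ZMod.natCast_eq_natCast_iff _ _ _).mp h))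
  have hcauchy : CauchySeq fun N => q ^ z.appr N :=
    cauchySeq_of_le_tendsto_0 _ (fun n m N hn hm => hdist <| by
      rw [z.natCast_appr_eq_toZModPow hn, z.natCast_appr_eq_toZModPow hm]) hε
  refine tendsto_of_tendsto_of_dist hcauchy.tendsto_limUnder
    (squeeze_zero (fun _ => dist_nonneg) (fun N => hdist ?_) hε)
  rw [hn, z.natCast_appr_eq_toZModPow le_rfl]

lemma tendsto_pow_appr_qpow (hpK : ‖(p : K)‖ < 1) (hq : ‖q - 1‖ < 1) (z : ℤ_[p]) :
    Tendsto (fun N => q ^ z.appr N) atTop (𝓝 (qpow q z)) :=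
  tendsto_pow_qpow hpK hq fun _ => z.natCast_appr_eq_toZModPow le_rfl

lemma norm_qpow_sub_one_le (hpK : ‖(p : K)‖ < 1) (hq : ‖q - 1‖ < 1) (z : ℤ_[p]) :
    ‖qpow q z - 1‖ ≤ ‖q - 1‖ :=
  le_of_tendsto ((tendsto_pow_appr_qpow hpK hq z).sub_const 1).norm
    (Eventually.of_forall fun _ => norm_pow_sub_one_le hq.le _)

lemma qpow_sum (hpK : ‖(p : K)‖ < 1) (hq : ‖q - 1‖ < 1) {ι : Type*} (s : Finset ι)
    (z : ι → ℤ_[p]) : qpow q (∑ i ∈ s, z i) = ∏ i ∈ s, qpow q (z i) := by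
  refine tendsto_nhds_unique (tendsto_pow_qpow hpK hq (n := fun N => ∑ i ∈ s, (z i).appr N)
    fun N => ?_) ?_
  · simp only [Nat.cast_sum, map_sum, (z _).natCast_appr_eq_toZModPow le_rfl]
  · simpa only [prod_pow_eq_pow_sum] using
      tendsto_finsetProd s fun i _ => tendsto_pow_appr_qpow hpK hq (z i)

lemma qpow_natCast_mul (hpK : ‖(p : K)‖ < 1) (hq : ‖q - 1‖ < 1) (m : ℕ) (z : ℤ_[p]) :
    qpow q ((m : ℤ_[p]) * z) = qpow q z ^ m := by
  simpa using qpow_sum hpK hq (range m) fun _ => z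

lemma qnum_pow_eq (hpK : ‖(p : K)‖ < 1) (hq : ‖q - 1‖ < 1) (z : ℤ_[p]) (k : ℕ) :
    qnum q z ^ k = ((1 - q)⁻¹) ^ k *
      ∑ l ∈ range (k + 1), (k.choose l : K) * (-1) ^ l * qpow q ((l : ℤ_[p]) * z) := by
  rw [qnum, div_pow, div_eq_inv_mul, inv_pow, sub_eq_neg_add 1 (qpow q z), add_pow]
  congr 1
  refine sum_congr rfl fun l _ => ?_
  rw [qpow_natCast_mul hpK hq, one_pow, mul_one, neg_pow]
  ring

lemma sum_piFinset_mul_qpow (hpK : ‖(p : K)‖ < 1) (hq : ‖q - 1‖ < 1) {r : ℕ}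
    (a : Fin r → ℤ_[p]) (u : K) (s : Finset ℕ) (f : ℕ → K) (l : ℕ) :
    ∑ x ∈ Fintype.piFinset fun _ : Fin r => s,
        (∏ j, f (x j)) * u ^ (∑ j, x j) * qpow q ((l : ℤ_[p]) * ∑ j, a j * (x j : ℤ_[p]))
      = ∏ j, ∑ n ∈ s, f n * (qpow q ((l : ℤ_[p]) * a j) * u) ^ n := by
  rw [← sum_prod_piFinset]
  refine sum_congr rfl fun x _ => ?_
  have hsplit : (l : ℤ_[p]) * ∑ j, a j * (x j : ℤ_[p]) = ∑ j, (x j : ℤ_[p]) * (l * a j) := by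
    rw [mul_sum]
    exact sum_congr rfl fun j _ => by ring
  simp only [hsplit, qpow_sum hpK hq, qpow_natCast_mul hpK hq, ← prod_pow_eq_pow_sum, mul_pow,
    ← prod_mul_distrib]
  exact prod_congr rfl fun j _ => by ring

lemma sum_piFinset_mul_sum_qpow (hpK : ‖(p : K)‖ < 1) (hq : ‖q - 1‖ < 1) {r : ℕ}
    (a : Fin r → ℤ_[p]) (u : K) (s t : Finset ℕ) (f : ℕ → K) (e : ℕ → K) :
    ∑ x ∈ Fintype.piFinset fun _ : Fin r => s, (∏ j, f (x j)) * u ^ (∑ j, x j) *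
        ∑ l ∈ t, e l * qpow q ((l : ℤ_[p]) * ∑ j, a j * (x j : ℤ_[p]))
      = ∑ l ∈ t, e l * ∏ j, ∑ n ∈ s, f n * (qpow q ((l : ℤ_[p]) * a j) * u) ^ n := by
  simp only [mul_sum, ← sum_piFinset_mul_qpow hpK hq]
  rw [sum_comm]
  exact sum_congr rfl fun l _ => sum_congr rfl fun x _ => by ring

lemma sum_piFinset_mul_qnum_pow_mul (hpK : ‖(p : K)‖ < 1) (hq : ‖q - 1‖ < 1) {r : ℕ}
    (a : Fin r → ℤ_[p]) (u : K) (s : Finset ℕ) (f : ℕ → K) (k : ℕ) :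
    ∑ x ∈ Fintype.piFinset fun _ : Fin r => s,
        (∏ j, f (x j)) * qnum q (∑ j, a j * (x j : ℤ_[p])) ^ k * u ^ (∑ j, x j)
      = ∑ l ∈ range (k + 1), ((1 - q)⁻¹) ^ k * ((k.choose l : K) * (-1) ^ l) *
          ∏ j, ∑ n ∈ s, f n * (qpow q ((l : ℤ_[p]) * a j) * u) ^ n := by
  rw [← sum_piFinset_mul_sum_qpow hpK hq]
  refine sum_congr rfl fun x _ => ?_
  rw [qnum_pow_eq hpK hq]
  simp only [mul_sum, sum_mul]
  exact sum_congr rfl fun l _ => by ring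

lemma inv_mul_sum_piFinset_range_eq (hpK : ‖(p : K)‖ < 1) (hq : ‖q - 1‖ < 1) {r d : ℕ}
    (a : Fin r → ℤ_[p]) (u : K) (f : ℕ → K) (k : ℕ) (hud : 1 - u ^ d ≠ 0)
    (hqd : 1 - q ^ d ≠ 0) :
    ((1 - u ^ d)⁻¹) ^ r * ((1 - q ^ d) / (1 - q)) ^ k *
        ∑ i ∈ Fintype.piFinset fun _ : Fin r => range d,
          u ^ (∑ j, i j) * (∏ j, f (i j)) *
            ((1 - u ^ d) ^ r * ((1 - q ^ d)⁻¹) ^ k *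
              ∑ l ∈ range (k + 1), (k.choose l : K) * (-1) ^ l *
                qpow q ((l : ℤ_[p]) * ∑ j, a j * (i j : ℤ_[p])) *
                  ∏ j, (1 - qpow q (((d * l : ℕ) : ℤ_[p]) * a j) * u ^ d)⁻¹)
      = ∑ l ∈ range (k + 1), ((1 - q)⁻¹) ^ k * ((k.choose l : K) * (-1) ^ l) *
          ∏ j, (∑ n ∈ range d, f n * (qpow q ((l : ℤ_[p]) * a j) * u) ^ n) /
            (1 - (qpow q ((l : ℤ_[p]) * a j) * u) ^ d) := by
  set β : ℕ → Fin r → K := fun l j => qpow q ((l : ℤ_[p]) * a j)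
  have hD : ∀ l : ℕ, ∏ j, (1 - qpow q (((d * l : ℕ) : ℤ_[p]) * a j) * u ^ d)⁻¹
      = (∏ j, (1 - (β l j * u) ^ d))⁻¹ := fun l => by
    rw [← prod_inv_distrib]
    exact prod_congr rfl fun j _ => by
      rw [Nat.cast_mul, mul_assoc, qpow_natCast_mul hpK hq, mul_pow]
  have hconst : ((1 - u ^ d)⁻¹) ^ r * ((1 - q ^ d) / (1 - q)) ^ k *
      ((1 - u ^ d) ^ r * ((1 - q ^ d)⁻¹) ^ k) = ((1 - q)⁻¹) ^ k := by
    simp only [inv_pow, div_pow]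
    field_simp
  set e : ℕ → K := fun l => (1 - u ^ d) ^ r * ((1 - q ^ d)⁻¹) ^ k *
    ((k.choose l : K) * (-1) ^ l * (∏ j, (1 - (β l j * u) ^ d))⁻¹)
  have hterm : ∀ i : Fin r → ℕ, u ^ (∑ j, i j) * (∏ j, f (i j)) *
      ((1 - u ^ d) ^ r * ((1 - q ^ d)⁻¹) ^ k *
        ∑ l ∈ range (k + 1), (k.choose l : K) * (-1) ^ l *
          qpow q ((l : ℤ_[p]) * ∑ j, a j * (i j : ℤ_[p])) *
            ∏ j, (1 - qpow q (((d * l : ℕ) : ℤ_[p]) * a j) * u ^ d)⁻¹)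
      = (∏ j, f (i j)) * u ^ (∑ j, i j)
          * ∑ l ∈ range (k + 1), e l * qpow q ((l : ℤ_[p]) * ∑ j, a j * (i j : ℤ_[p])) := by
    intro i
    simp only [hD, mul_sum]
    exact sum_congr rfl fun l _ => by ring
  rw [sum_congr rfl fun i _ => hterm i, sum_piFinset_mul_sum_qpow hpK hq, mul_sum]
  refine sum_congr rfl fun l _ => ?_
  simp only [e, prod_div_distrib]
  linear_combination ((k.choose l : K) * (-1) ^ l * (∏ j, ∑ n ∈ range d, f n * (β l j * u) ^ n) *
    (∏ j, (1 - (β l j * u) ^ d))⁻¹) * hconst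

end Qpow

lemma one_sub_pow_mul_sum_range_mul {R : Type*} [CommRing R] {d : ℕ} (f : ZMod d → R) (b : R)
    (P : ℕ) :
    (1 - b ^ d) * ∑ n ∈ range (d * P), f n * b ^ n
      = (1 - b ^ (d * P)) * ∑ i ∈ range d, f i * b ^ i := by
  induction P with
  | zero => simp
  | succ P ih =>
    have hblock : ∑ i ∈ range d, f ((d * P + i : ℕ) : ZMod d) * b ^ (d * P + i)
        = b ^ (d * P) * ∑ i ∈ range d, f i * b ^ i := by
      rw [mul_sum]
      refine sum_congr rfl fun i _ => ?_
      simp only [Nat.cast_add, Nat.cast_mul, ZMod.natCast_self, zero_mul, zero_add, pow_add]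
      ring
    rw [Nat.mul_succ, sum_range_add, mul_add, ih, hblock, pow_add]
    ring

section DistributionLimit

variable {K : Type*} [NormedField K] [IsUltrametricDist K] {u : K}

lemma norm_le_norm_one_sub {w : K} (hw : 1 ≤ ‖1 - w‖) : ‖w‖ ≤ ‖1 - w‖ := by
  simpa using (IsUltrametricDist.norm_add_le_max 1 (-(1 - w))).trans
    (max_le (norm_one.trans_le hw) (norm_neg _).le)

lemma norm_one_sub_mul_eq {g w : K} (hg : ‖g - 1‖ < 1) (hw : 1 ≤ ‖1 - w‖) :
    ‖1 - g * w‖ = ‖1 - w‖ := by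
  have hsmall : ‖(g - 1) * w‖ < ‖1 - w‖ :=
    calc ‖(g - 1) * w‖ ≤ ‖g - 1‖ * ‖1 - w‖ := by
          rw [norm_mul]; gcongr; exact norm_le_norm_one_sub hw
      _ < ‖1 - w‖ := mul_lt_of_lt_one_left (one_pos.trans_le hw) hg
  rw [show 1 - g * w = (1 - w) - (g - 1) * w by ring, sub_eq_add_neg,
    IsUltrametricDist.norm_add_eq_max_of_norm_ne_norm (by rw [norm_neg]; exact hsmall.ne'),
    norm_neg, max_eq_left hsmall.le]

lemma tendsto_one_sub_mul_pow_div_one_sub_pow {β : K} {M : ℕ → ℕ}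
    (hu : ∀ N, 1 ≤ ‖1 - u ^ M N‖) (hβ : Tendsto (fun N => β ^ M N) atTop (𝓝 1)) :
    Tendsto (fun N => (1 - (β * u) ^ M N) / (1 - u ^ M N)) atTop (𝓝 1) := by
  rw [tendsto_iff_norm_sub_tendsto_zero]
  refine squeeze_zero (fun _ => norm_nonneg _) (fun N => ?_)
    (tendsto_iff_norm_sub_tendsto_zero.mp hβ)
  have hne : 1 - u ^ M N ≠ 0 := norm_pos_iff.mp (one_pos.trans_le (hu N))
  calc ‖(1 - (β * u) ^ M N) / (1 - u ^ M N) - 1‖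
      = ‖1 - β ^ M N‖ * (‖u ^ M N‖ / ‖1 - u ^ M N‖) := by
        rw [div_sub_one hne, norm_div, ← mul_div_assoc, ← norm_mul]
        congr 2
        ring
    _ ≤ ‖1 - β ^ M N‖ * 1 := by
        gcongr
        exact div_le_one_of_le₀ (norm_le_norm_one_sub (hu N)) (norm_nonneg _)
    _ = ‖β ^ M N - 1‖ := by rw [mul_one, norm_sub_rev]

lemma tendsto_sum_range_mul_prime_pow_div {p : ℕ} (hp : p.Prime) (hpK : ‖(p : K)‖ < 1)
    (hu : ∀ f : ℕ, 1 ≤ f → 1 ≤ ‖1 - u ^ f‖) {d : ℕ} (hd : 1 ≤ d) {β : K} (hβ : ‖β - 1‖ < 1)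
    (f : ZMod d → K) :
    Tendsto (fun N => (∑ n ∈ range (d * p ^ N), f n * (β * u) ^ n) / (1 - u ^ (d * p ^ N)))
      atTop (𝓝 ((∑ i ∈ range d, f i * (β * u) ^ i) / (1 - (β * u) ^ d))) := by
  have hbd : 1 - (β * u) ^ d ≠ 0 := by
    rw [← norm_pos_iff, mul_pow,
      norm_one_sub_mul_eq ((norm_pow_sub_one_le hβ.le d).trans_lt hβ) (hu d hd)]
    exact one_pos.trans_le (hu d hd)
  have hβM : Tendsto (fun N => β ^ (d * p ^ N)) atTop (𝓝 1) := by
    simpa only [pow_mul', one_pow] using (tendsto_pow_prime_pow_nhds_one hp hpK hβ).pow d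
  have hM : ∀ N, 1 ≤ d * p ^ N := fun N => one_le_mul hd (Nat.one_le_pow _ _ hp.pos)
  have hlim := (tendsto_one_sub_mul_pow_div_one_sub_pow (fun N => hu _ (hM N)) hβM).const_mul
    ((∑ i ∈ range d, f i * (β * u) ^ i) / (1 - (β * u) ^ d))
  rw [mul_one] at hlim
  refine hlim.congr fun N => ?_
  have hne : 1 - u ^ (d * p ^ N) ≠ 0 := norm_pos_iff.mp (one_pos.trans_le (hu _ (hM N)))
  rw [div_mul_div_comm, div_eq_div_iff (mul_ne_zero hbd hne) hne]
  linear_combination (-(1 - u ^ (d * p ^ N))) * one_sub_pow_mul_sum_range_mul f (β * u) (p ^ N)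

lemma tendsto_div_pow_mul_prod_sum_range_mul_prime_pow {p : ℕ} (hp : p.Prime)
    (hpK : ‖(p : K)‖ < 1) (hu : ∀ f : ℕ, 1 ≤ f → 1 ≤ ‖1 - u ^ f‖) {d : ℕ} (hd : 1 ≤ d) {r : ℕ}
    {β : Fin r → K} (hβ : ∀ j, ‖β j - 1‖ < 1) (f : ZMod d → K) :
    Tendsto (fun N => ((1 - u) / (1 - u ^ (d * p ^ N))) ^ r *
        ∏ j, ∑ n ∈ range (d * p ^ N), f n * (β j * u) ^ n)
      atTop (𝓝 ((1 - u) ^ r *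
        ∏ j, (∑ i ∈ range d, f i * (β j * u) ^ i) / (1 - (β j * u) ^ d))) := by
  refine ((tendsto_finsetProd univ fun j _ =>
    tendsto_sum_range_mul_prime_pow_div hp hpK hu hd (hβ j) f).const_mul ((1 - u) ^ r)).congr
    fun N => ?_
  rw [div_pow, prod_div_distrib, prod_const, card_univ, Fintype.card_fin]
  ring

end DistributionLimit

lemma pow_pred_lt_inv_of_lt_rpow {p : ℕ} (hp : 2 ≤ p) {t : ℝ} (ht0 : 0 ≤ t)
    (ht : t < (p : ℝ) ^ (-(1 : ℝ) / ((p : ℝ) - 1))) : t ^ (p - 1) < (p : ℝ)⁻¹ := by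
  have hp1 : ((p - 1 : ℕ) : ℝ) = (p : ℝ) - 1 := by rw [Nat.cast_sub (by omega), Nat.cast_one]
  have hp1' : (p : ℝ) - 1 ≠ 0 := by rw [← hp1]; exact_mod_cast (by omega : p - 1 ≠ 0)
  calc t ^ (p - 1) < ((p : ℝ) ^ (-(1 : ℝ) / ((p : ℝ) - 1))) ^ (p - 1) :=
        pow_lt_pow_left₀ ht ht0 (by omega)
    _ = (p : ℝ)⁻¹ := by
        rw [← Real.rpow_natCast, ← Real.rpow_mul (Nat.cast_nonneg p), hp1,
          div_mul_cancel₀ _ hp1', Real.rpow_neg_one]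

theorem qEulerBarnes_character_distribution_general
    {p : ℕ} [Fact p.Prime] {K : Type*} [NormedField K] [CompleteSpace K]
    [IsUltrametricDist K] (hpK : ‖(p : K)‖ = (p : ℝ)⁻¹)
    (r : ℕ) (a : Fin r → ℤ_[p])
    (u q : K) (hu : ∀ f : ℕ, 1 ≤ f → 1 ≤ ‖1 - u ^ f‖)
    (hq0 : 0 < ‖1 - q‖) (hq1 : ‖1 - q‖ < (p : ℝ) ^ (-(1 : ℝ) / ((p : ℝ) - 1)))
    (d : ℕ) (hd : 1 ≤ d) (χ : DirichletCharacter K d) (k : ℕ) :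
    ∃ L : K,
      Tendsto
        (fun N : ℕ =>
          ((1 - u) / (1 - u ^ (d * p ^ N))) ^ r *
            ∑ x ∈ Fintype.piFinset fun _ : Fin r => Finset.range (d * p ^ N),
              (∏ j, χ ((x j : ZMod d))) * (qnum q (∑ j, a j * (x j : ℤ_[p]))) ^ k *
                u ^ (∑ j, x j))
        atTop (nhds L) ∧
      ((1 - u)⁻¹) ^ r * L =
        ((1 - u ^ d)⁻¹) ^ r * ((1 - q ^ d) / (1 - q)) ^ k *
          ∑ i ∈ Fintype.piFinset fun _ : Fin r => Finset.range d,
            u ^ (∑ j, i j) * (∏ j, χ ((i j : ZMod d))) *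
              ((1 - u ^ d) ^ r * ((1 - q ^ d)⁻¹) ^ k *
                ∑ l ∈ Finset.range (k + 1),
                  (k.choose l : K) * (-1) ^ l *
                    qpow q ((l : ℤ_[p]) * ∑ j, a j * (i j : ℤ_[p])) *
                      ∏ j, (1 - qpow q (((d * l : ℕ) : ℤ_[p]) * a j) * u ^ d)⁻¹) := by
  have hp : p.Prime := Fact.out
  have hpK1 : ‖(p : K)‖ < 1 := hpK ▸ inv_lt_one_of_one_lt₀ (by exact_mod_cast hp.one_lt)
  have hqp : ‖q - 1‖ ^ (p - 1) < ‖(p : K)‖ :=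
    hpK ▸ pow_pred_lt_inv_of_lt_rpow hp.two_le (norm_nonneg _) (norm_sub_rev q 1 ▸ hq1)
  have hq : ‖q - 1‖ < 1 :=
    (pow_lt_one_iff_of_nonneg (norm_nonneg _) (by have := hp.two_le; omega)).mp (hqp.trans hpK1)
  have h1qd : 1 - q ^ d ≠ 0 := fun h => (norm_pos_iff.mp hq0) <| by
    rw [eq_one_of_pow_eq_one hp hpK1 hqp (by omega) (sub_eq_zero.mp h).symm, sub_self]
  have h1u : 1 - u ≠ 0 := norm_pos_iff.mp (one_pos.trans_le (by simpa using hu 1 le_rfl))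
  have h1ud : 1 - u ^ d ≠ 0 := norm_pos_iff.mp (one_pos.trans_le (hu d hd))
  have hβ : ∀ (l : ℕ) j, ‖qpow q ((l : ℤ_[p]) * a j) - 1‖ < 1 :=
    fun _ _ => (norm_qpow_sub_one_le hpK1 hq _).trans_lt hq
  refine ⟨_, (tendsto_finsetSum (range (k + 1)) fun l _ =>
    (tendsto_div_pow_mul_prod_sum_range_mul_prime_pow hp hpK1 hu hd (hβ l) χ).const_mul
      (((1 - q)⁻¹) ^ k * ((k.choose l : K) * (-1) ^ l))).congr fun N => ?_, ?_⟩
  · rw [sum_piFinset_mul_qnum_pow_mul hpK1 hq a u _ (fun n : ℕ => χ n), mul_sum]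
    exact sum_congr rfl fun l _ => mul_left_comm _ _ _
  · rw [inv_mul_sum_piFinset_range_eq hpK1 hq a u (fun n : ℕ => χ n) k h1ud h1qd, mul_sum]
    exact sum_congr rfl fun l _ => by
      rw [mul_left_comm, inv_pow (1 - u), inv_mul_cancel_left₀ (pow_ne_zero r h1u)]

/-- **character distribution relation, Theorem 6.** For `k ≥ 0`, the limit
`H_{k,χ}^{(r)}(u,q|a⃗) = lim_N ((1-u)/(1-u^{d p^N}))^r ∑_{x_1,…,x_r=0}^{d p^N-1}
  (∏_j χ(x_j)) [∑_j a_j x_j : q]^k u^{∑_j x_j}` exists, and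
`(1-u)^{-r} H_{k,χ}^{(r)}(u,q|a⃗)
  = (1-u^d)^{-r} [d:q]^k ∑_{i_1,…,i_r=0}^{d-1} u^{∑ i_j} (∏_j χ(i_j)) H̃_k(i⃗)`,
where `H̃_k(i⃗) = (1-u^d)^r (1-q^d)^{-k} ∑_{l=0}^k C(k,l)(-1)^l q^{l ∑_j a_j i_j}
  ∏_j (1 - q^{d l a_j} u^d)⁻¹`. -/
theorem qEulerBarnes_character_distribution
    {p : ℕ} [Fact p.Prime] {K : Type*} [NormedField K] [CompleteSpace K]
    [IsUltrametricDist K] (hpK : ‖(p : K)‖ = (p : ℝ)⁻¹)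
    (r : ℕ) (hr : 1 ≤ r) (a : Fin r → ℤ_[p]) (ha : ∀ j, a j ≠ 0)
    (u q : K) (hu : ∀ f : ℕ, 1 ≤ f → 1 ≤ ‖1 - u ^ f‖)
    (hq0 : 0 < ‖1 - q‖) (hq1 : ‖1 - q‖ < (p : ℝ) ^ (-(1 : ℝ) / ((p : ℝ) - 1)))
    (d : ℕ) (hd : 1 ≤ d) (χ : DirichletCharacter K d) (k : ℕ) :
    ∃ L : K,
      Tendsto
        (fun N : ℕ =>
          ((1 - u) / (1 - u ^ (d * p ^ N))) ^ r *
            ∑ x ∈ Fintype.piFinset fun _ : Fin r => Finset.range (d * p ^ N),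
              (∏ j, χ ((x j : ZMod d))) * (qnum q (∑ j, a j * (x j : ℤ_[p]))) ^ k *
                u ^ (∑ j, x j))
        atTop (nhds L) ∧
      ((1 - u)⁻¹) ^ r * L =
        ((1 - u ^ d)⁻¹) ^ r * ((1 - q ^ d) / (1 - q)) ^ k *
          ∑ i ∈ Fintype.piFinset fun _ : Fin r => Finset.range d,
            u ^ (∑ j, i j) * (∏ j, χ ((i j : ZMod d))) *
              ((1 - u ^ d) ^ r * ((1 - q ^ d)⁻¹) ^ k *
                ∑ l ∈ Finset.range (k + 1),
                  (k.choose l : K) * (-1) ^ l *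
                    qpow q ((l : ℤ_[p]) * ∑ j, a j * (i j : ℤ_[p])) *
                      ∏ j, (1 - qpow q (((d * l : ℕ) : ℤ_[p]) * a j) * u ^ d)⁻¹) :=
  qEulerBarnes_character_distribution_general hpK r a u q hu hq0 hq1 d hd χ k
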